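/- arXiv:2011.12237 — 4 statements merged into one kernel-verified Lean document; each statement's English description precedes it below -/
import Mathlib

section
/- In the LLG domain, if the global bidder bids β̄ on {1,2}, the local bidders make simple bids and jointly win (b₁({1}) + b₂({2}) ≥ β̄), then the VCG-nearest payment of local bidder i equals (1/2)·(VCG_i + min(b_i({i}), β̄)), where VCG_i = β̄ − min(b_j({j}), β̄) for the other local bidder j. -/
open Finset

/-- Maximum reported social welfare achievable by the bidders in `L`
using only the goods in `K`. -/
noncomputable def W {ι γ : Type*} [DecidableEq γ] (b : ι → Finset γ → ℝ)
    (L : Finset ι) (K : Finset γ) : ℝ :=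
  sSup {w : ℝ | ∃ x : ι → Finset γ,
    (∀ i, x i ⊆ K) ∧ (∀ i j, i ≠ j → Disjoint (x i) (x j)) ∧
    w = ∑ i ∈ L, b i (x i)}

/-- Single-minded XOR bid of `β` on the bundle `S` (with free disposal). -/
def sm {γ : Type*} [DecidableEq γ] (S : Finset γ) (β : ℝ) : Finset γ → ℝ :=
  fun K => if S ⊆ K then β else 0

/-- The LLG bid profile: locals bid `β₁` on `{0}` and `β₂` on `{1}`,
the global bidder bids `βbar` on `{0,1}`. -/
noncomputable def llgBids (β₁ β₂ βbar : ℝ) : Fin 3 → Finset (Fin 2) → ℝ :=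
  ![sm {0} β₁, sm {1} β₂, sm {0, 1} βbar]

/-- The allocation in which both locals win their singleton bundle. -/
def llgAlloc : Fin 3 → Finset (Fin 2) := ![{0}, {1}, ∅]

/-- `p` is an outcome in the revealed core: payments are nonnegative,
individually rational, and satisfy all coalitional core constraints. -/
noncomputable def inCore (b : Fin 3 → Finset (Fin 2) → ℝ)
    (x : Fin 3 → Finset (Fin 2)) (p : Fin 3 → ℝ) : Prop :=
  (∀ i, 0 ≤ p i) ∧ (∀ i, p i ≤ b i (x i)) ∧
  ∀ L : Finset (Fin 3),
    W b L Finset.univ - W b L (L.biUnion x) ≤ ∑ j ∈ Lᶜ, p j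

/-- Bidder `i`'s VCG payment given bids `b` and allocation `x`. -/
noncomputable def vcgPay (b : Fin 3 → Finset (Fin 2) → ℝ)
    (x : Fin 3 → Finset (Fin 2)) (i : Fin 3) : ℝ :=
  W b (Finset.univ.erase i) Finset.univ
    - W b (Finset.univ.erase i) (Finset.univ \ x i)

/-! When the locals win, the core reduces to `p₂ = 0`, individual rationality, the global
bidder's coalition constraint `p₀ + p₁ ≥ β̄`, and `p₀ ≥ β̄ - β₂`, `p₁ ≥ β̄ - β₁`. Since the locals
jointly win, `β̄ ≤ min β₁ β̄ + min β₂ β̄`, so the core meets the line `p₀ + p₁ = β̄` and the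
minimum core revenue is `β̄`. On that line the point nearest to the VCG vector is its orthogonal
projection, which splits the surplus `min β₁ β̄ + min β₂ β̄ - β̄` equally between the locals; this
point lies in the core, so it is the VCG-nearest payment. -/

theorem W_eq_of_isGreatest {ι γ : Type*} [DecidableEq γ] (b : ι → Finset γ → ℝ)
    (L : Finset ι) (K : Finset γ) (v : ℝ)
    (hmem : ∃ x : ι → Finset γ,
      (∀ i, x i ⊆ K) ∧ (∀ i j, i ≠ j → Disjoint (x i) (x j)) ∧ v = ∑ i ∈ L, b i (x i))
    (hub : ∀ x : ι → Finset γ, (∀ i, x i ⊆ K) →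
      (∀ i j, i ≠ j → Disjoint (x i) (x j)) → ∑ i ∈ L, b i (x i) ≤ v) :
    W b L K = v :=
  IsGreatest.csSup_eq ⟨hmem, by rintro w ⟨x, hxK, hdisj, rfl⟩; exact hub x hxK hdisj⟩

theorem ite_sm_le {γ : Type*} [DecidableEq γ] {S T K : Finset γ} {β : ℝ} (hβ : 0 ≤ β)
    (hTK : T ⊆ K) (P : Prop) [Decidable P] :
    (if P then sm S β T else 0) ≤ if P ∧ S ⊆ K then β else 0 := by
  unfold sm
  split_ifs with hP hST hSK <;>
    first | exact le_rfl | exact hβ | exact absurd ⟨hP, hST.trans hTK⟩ hSK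

theorem sum_fin_three_eq_ite {M : Type*} [AddCommMonoid M] (L : Finset (Fin 3))
    (f : Fin 3 → M) :
    ∑ i ∈ L, f i = (if 0 ∈ L then f 0 else 0) + (if 1 ∈ L then f 1 else 0)
      + (if 2 ∈ L then f 2 else 0) := by
  rw [← univ_inter L, ← sum_ite_mem, Fin.sum_univ_three]
  simp only [univ_inter]

theorem pair_subset_iff_eq_univ (K : Finset (Fin 2)) : {0, 1} ⊆ K ↔ K = univ := by
  rw [show ({0, 1} : Finset (Fin 2)) = univ by decide, univ_subset_iff]

section LLG

variable {β₁ β₂ βbar : ℝ}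

theorem W_llgBids (h₁ : 0 ≤ β₁) (h₂ : 0 ≤ β₂)
    (L : Finset (Fin 3)) (K : Finset (Fin 2)) :
    W (llgBids β₁ β₂ βbar) L K =
      max ((if 0 ∈ L ∧ 0 ∈ K then β₁ else 0) + (if 1 ∈ L ∧ 1 ∈ K then β₂ else 0))
        (if 2 ∈ L ∧ K = univ then βbar else 0) := by
  apply W_eq_of_isGreatest
  · rcases le_total ((if 0 ∈ L ∧ 0 ∈ K then β₁ else 0) + (if 1 ∈ L ∧ 1 ∈ K then β₂ else 0))
        (if 2 ∈ L ∧ K = univ then βbar else 0) with h | h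
    · refine ⟨![∅, ∅, K], ?_, ?_, ?_⟩
      · intro i; fin_cases i <;> simp
      · intro i j hij; fin_cases i <;> fin_cases j <;> simp_all
      · rw [max_eq_right h, sum_fin_three_eq_ite]
        simp [llgBids, sm, pair_subset_iff_eq_univ, ite_and]
    · refine ⟨![{0} ∩ K, {1} ∩ K, ∅], ?_, ?_, ?_⟩
      · intro i; fin_cases i <;> simp
      · intro i j hij
        fin_cases i <;> fin_cases j <;> simp_all [disjoint_left]
      · rw [max_eq_left h, sum_fin_three_eq_ite]
        simp [llgBids, sm, ite_and]
  · intro x hxK hdisj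
    rw [sum_fin_three_eq_ite]
    change ((if 0 ∈ L then sm {0} β₁ (x 0) else 0) + (if 1 ∈ L then sm {1} β₂ (x 1) else 0)
      + (if 2 ∈ L then sm {0, 1} βbar (x 2) else 0)) ≤ _
    by_cases hg : {0, 1} ⊆ x 2
    · have hK : K = univ := (pair_subset_iff_eq_univ K).1 (hg.trans (hxK 2))
      have h0 : ¬ {0} ⊆ x 0 := fun h =>
        disjoint_left.mp (hdisj 0 2 (by decide)) (h (mem_singleton_self 0)) (hg (by simp))
      have h1 : ¬ {1} ⊆ x 1 := fun h =>
        disjoint_left.mp (hdisj 1 2 (by decide)) (h (mem_singleton_self 1)) (hg (by simp))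
      apply le_max_of_le_right
      simp [sm, h0, h1, hg, hK]
    · apply le_max_of_le_left
      rw [show sm {0, 1} βbar (x 2) = 0 from if_neg hg, ite_self, add_zero]
      simpa only [singleton_subset_iff] using add_le_add
        (ite_sm_le (S := {0}) h₁ (hxK 0) (0 ∈ L)) (ite_sm_le (S := {1}) h₂ (hxK 1) (1 ∈ L))

theorem finset_fin_three_cases (L : Finset (Fin 3)) :
    L = ∅ ∨ L = {0} ∨ L = {1} ∨ L = {2} ∨ L = {0, 1} ∨ L = {0, 2} ∨ L = {1, 2} ∨ L = univ := by
  revert L; decide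

theorem llgBids_llgAlloc (i : Fin 3) :
    llgBids β₁ β₂ βbar i (llgAlloc i) = ![β₁, β₂, 0] i := by
  fin_cases i <;> simp [llgBids, llgAlloc, sm]

theorem inCore_llgBids_iff (h₁ : 0 ≤ β₁) (h₂ : 0 ≤ β₂) (q : Fin 3 → ℝ) :
    inCore (llgBids β₁ β₂ βbar) llgAlloc q ↔
      q 2 = 0 ∧ 0 ≤ q 0 ∧ q 0 ≤ β₁ ∧ 0 ≤ q 1 ∧ q 1 ≤ β₂ ∧
        βbar ≤ q 0 + q 1 ∧ βbar - β₂ ≤ q 0 ∧ βbar - β₁ ≤ q 1 := by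
  simp only [inCore, llgBids_llgAlloc]
  constructor
  · rintro ⟨hnn, hIR, hL⟩
    have c2 := hL {2}
    have c02 := hL {0, 2}
    have c12 := hL {1, 2}
    simp +decide only [W_llgBids h₁ h₂, sum_fin_three_eq_ite, llgAlloc, if_true, if_false,
      add_zero, zero_add, max_self, max_eq_left h₁, max_eq_left h₂, max_le_iff,
      sub_le_iff_le_add] at c2 c02 c12
    exact ⟨le_antisymm (hIR 2) (hnn 2), hnn 0, hIR 0, hnn 1, hIR 1, c2.2,
      by linarith [c12.2], by linarith [c02.2]⟩
  · rintro ⟨hq2, hq0, hq0', hq1, hq1', hsum, hb0, hb1⟩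
    refine ⟨fun i => ?_, fun i => ?_, fun L => ?_⟩
    · fin_cases i <;> simp [hq0, hq1, hq2]
    · fin_cases i <;> simp [hq0', hq1', hq2]
    rcases finset_fin_three_cases L with rfl | rfl | rfl | rfl | rfl | rfl | rfl | rfl <;>
    simp +decide only [W_llgBids h₁ h₂, sum_fin_three_eq_ite, llgAlloc, if_true, if_false,
      add_zero, zero_add, max_self, max_eq_left h₁, max_eq_left h₂, max_eq_left (add_nonneg h₁ h₂),
      max_le_iff, sub_le_iff_le_add] <;>
    (try constructor) <;> linarith [le_max_left (β₁ + β₂) βbar, le_max_right (β₁ + β₂) βbar]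

theorem vcgPay_llgBids (h₁ : 0 ≤ β₁) (h₂ : 0 ≤ β₂) :
    vcgPay (llgBids β₁ β₂ βbar) llgAlloc = ![βbar - min β₂ βbar, βbar - min β₁ βbar, 0] := by
  funext i
  fin_cases i <;>
  simp +decide [vcgPay, W_llgBids h₁ h₂, llgAlloc, max_eq_left h₁, max_eq_left h₂] <;>
  linarith [min_add_max β₁ βbar, min_add_max β₂ βbar]

end LLG

theorem le_min_add_min {a b c : ℝ} (h : a ≤ b + c) (ha : 0 ≤ a) (hb : 0 ≤ b) (hc : 0 ≤ c) :
    a ≤ min b a + min c a := by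
  rcases le_total b a with hba | hab <;> rcases le_total c a with hca | hac <;>
    simp only [min_eq_left, min_eq_right, *] <;> linarith

/-- `t` is the orthogonal projection of `v` onto the line `x₀ + x₁ = t₀ + t₁`. -/
theorem eq_of_add_eq_of_sq_dist_le {u₀ u₁ t₀ t₁ v₀ v₁ : ℝ} (hsum : u₀ + u₁ = t₀ + t₁)
    (hbal : t₀ - v₀ = t₁ - v₁)
    (hle : (u₀ - v₀) ^ 2 + (u₁ - v₁) ^ 2 ≤ (t₀ - v₀) ^ 2 + (t₁ - v₁) ^ 2) :
    u₀ = t₀ ∧ u₁ = t₁ := by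
  have hpyth : (u₀ - v₀) ^ 2 + (u₁ - v₁) ^ 2
      = (t₀ - v₀) ^ 2 + (t₁ - v₁) ^ 2 + (u₀ - t₀) ^ 2 + (u₁ - t₁) ^ 2 := by
    have hu₁ : u₁ - t₁ = -(u₀ - t₀) := by linarith
    rw [show u₀ - v₀ = (u₀ - t₀) + (t₀ - v₀) by ring, show u₁ - v₁ = (u₁ - t₁) + (t₁ - v₁) by ring,
      hu₁, ← hbal]
    ring
  have h₀ : (u₀ - t₀) ^ 2 = 0 := le_antisymm (by linarith [sq_nonneg (u₁ - t₁)]) (sq_nonneg _)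
  have h₁ : (u₁ - t₁) ^ 2 = 0 := le_antisymm (by linarith [sq_nonneg (u₀ - t₀)]) (sq_nonneg _)
  exact ⟨sub_eq_zero.mp (pow_eq_zero_iff two_ne_zero |>.mp h₀),
    sub_eq_zero.mp (pow_eq_zero_iff two_ne_zero |>.mp h₁)⟩

/-- In LLG, if the global bidder bids `βbar` on `{0,1}`, the locals make simple
bids and jointly win (`βbar ≤ β₁ + β₂`), then the VCG-nearest payment (the point
of the minimum-revenue core closest to the VCG payments) of each local bidder `i`
is `(1/2)(VCG_i + min(b_i({i}), βbar))`, with `VCG_i = βbar − min(b_j({j}), βbar)`. -/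
theorem stmt1 (β₁ β₂ βbar : ℝ) (h₁ : 0 ≤ β₁) (h₂ : 0 ≤ β₂) (h₃ : 0 ≤ βbar)
    (hwin : βbar ≤ β₁ + β₂) (p : Fin 3 → ℝ)
    (hpcore : inCore (llgBids β₁ β₂ βbar) llgAlloc p)
    (hmin : ∀ q : Fin 3 → ℝ, inCore (llgBids β₁ β₂ βbar) llgAlloc q →
      ∑ i, p i ≤ ∑ i, q i)
    (hnear : ∀ q : Fin 3 → ℝ, inCore (llgBids β₁ β₂ βbar) llgAlloc q →
      (∑ i, q i = ∑ i, p i) →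
      ∑ i, (p i - vcgPay (llgBids β₁ β₂ βbar) llgAlloc i) ^ 2
        ≤ ∑ i, (q i - vcgPay (llgBids β₁ β₂ βbar) llgAlloc i) ^ 2) :
    p 0 = (1 / 2) * ((βbar - min β₂ βbar) + min β₁ βbar) ∧
    p 1 = (1 / 2) * ((βbar - min β₁ βbar) + min β₂ βbar) := by
  let t : Fin 3 → ℝ := ![(1 / 2) * ((βbar - min β₂ βbar) + min β₁ βbar),
    (1 / 2) * ((βbar - min β₁ βbar) + min β₂ βbar), 0]
  have ht : t 0 = (1 / 2) * ((βbar - min β₂ βbar) + min β₁ βbar) ∧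
      t 1 = (1 / 2) * ((βbar - min β₁ βbar) + min β₂ βbar) ∧ t 2 = 0 := ⟨rfl, rfl, rfl⟩
  have htcore : inCore (llgBids β₁ β₂ βbar) llgAlloc t := by
    have hjoint := le_min_add_min hwin h₃ h₁ h₂
    refine (inCore_llgBids_iff h₁ h₂ t).2 ⟨ht.2.2, ?_⟩
    rw [ht.1, ht.2.1]
    refine ⟨?_, ?_, ?_, ?_, ?_, ?_, ?_⟩ <;>
      linarith [le_min h₁ h₃, le_min h₂ h₃, min_le_left β₁ βbar, min_le_left β₂ βbar,
        min_le_right β₁ βbar, min_le_right β₂ βbar]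
  obtain ⟨hp2, -, -, -, -, hprev, -, -⟩ := (inCore_llgBids_iff h₁ h₂ p).1 hpcore
  have hsum : p 0 + p 1 = t 0 + t 1 := by
    have hle := hmin t htcore
    simp only [Fin.sum_univ_three, hp2, ht.2.2, add_zero] at hle
    exact le_antisymm hle (by rw [ht.1, ht.2.1]; linarith)
  have hdist := hnear t htcore (by simp only [Fin.sum_univ_three, hp2, ht.2.2, hsum])
  simp only [vcgPay_llgBids h₁ h₂, Fin.sum_univ_three, hp2, ht.2.2, Matrix.cons_val_zero,
    Matrix.cons_val_one, Matrix.cons_val_two, Matrix.tail_cons, Matrix.head_cons, sub_self,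
    ne_eq, OfNat.ofNat_ne_zero, not_false_eq_true, zero_pow, add_zero] at hdist
  rw [← ht.1, ← ht.2.1]
  exact eq_of_add_eq_of_sq_dist_le hsum (by rw [ht.1, ht.2.1]; ring) hdist
end

section
/- With U_s(m) := max_{1 ≤ i ≤ 2^m} (2^{i+1} − 2)/(2^i · (2^{2^m+1} − 2)) and U_c(m) := 2^m / (2^{2^m+1} − 2), the ratio U_c(m)/U_s(m) satisfies 2^{m−1} ≤ U_c(m)/U_s(m) ≤ 2^m for all m ≥ 1; hence U_c(m)/U_s(m) = Θ(2^m). -/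
/-- With `U_s(m)` the largest simple best-response utility
`max_{1 ≤ i ≤ 2^m} (2^(i+1) − 2)/(2^i (2^(2^m+1) − 2))` and
`U_c(m) = 2^m/(2^(2^m+1) − 2)` the complex best-response utility, the ratio
`U_c(m)/U_s(m)` lies between `2^(m−1)` and `2^m`; hence it is `Θ(2^m)`. -/
theorem stmt5 (m : ℕ) (hm : 1 ≤ m) (Us : ℝ)
    (hUs : IsGreatest
      ((fun i : ℕ =>
          ((2 : ℝ) ^ (i + 1) - 2) / ((2 : ℝ) ^ i * ((2 : ℝ) ^ (2 ^ m + 1) - 2)))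
        '' Set.Icc 1 (2 ^ m)) Us) :
    (2 : ℝ) ^ (m - 1) ≤ ((2 : ℝ) ^ m / ((2 : ℝ) ^ (2 ^ m + 1) - 2)) / Us ∧
    ((2 : ℝ) ^ m / ((2 : ℝ) ^ (2 ^ m + 1) - 2)) / Us ≤ (2 : ℝ) ^ m := by
  have hD : (0:ℝ) < (2:ℝ) ^ (2 ^ m + 1) - 2 := by
    have h2 : (2:ℝ) ^ 1 < (2:ℝ) ^ (2 ^ m + 1) := by
      apply pow_lt_pow_right₀ one_lt_two
      have : 1 ≤ 2 ^ m := Nat.one_le_two_pow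
      omega
    simp only [pow_one] at h2
    linarith
  -- each value of the function is at most 1 / 2^(2^m)
  have hval : ∀ i ∈ Set.Icc 1 (2 ^ m),
      ((2:ℝ) ^ (i + 1) - 2) / ((2:ℝ) ^ i * ((2:ℝ) ^ (2 ^ m + 1) - 2))
        ≤ 1 / (2:ℝ) ^ (2 ^ m) := by
    intro i hi
    rw [div_le_div_iff₀ (by positivity) (by positivity)]
    have hle : (2:ℝ) ^ i ≤ (2:ℝ) ^ (2 ^ m) := pow_le_pow_right₀ one_le_two hi.2
    have e1 : (2:ℝ) ^ (i + 1) = 2 * 2 ^ i := by ring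
    have e2 : (2:ℝ) ^ (2 ^ m + 1) = 2 * 2 ^ (2 ^ m) := by ring
    rw [e1, e2]
    nlinarith
  -- value at 2^m equals 1/2^(2^m)
  have hatmax : ((2:ℝ) ^ (2 ^ m + 1) - 2) / ((2:ℝ) ^ (2 ^ m) * ((2:ℝ) ^ (2 ^ m + 1) - 2))
      = 1 / (2:ℝ) ^ (2 ^ m) := by
    rw [mul_comm, div_mul_eq_div_div, div_self hD.ne']
  have hmem : (1 : ℕ) ≤ 2 ^ m := Nat.one_le_two_pow
  have hub : Us ≤ 1 / (2:ℝ) ^ (2 ^ m) := by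
    obtain ⟨i, hi, heq⟩ := hUs.1
    rw [← heq]
    exact hval i hi
  have hlb : 1 / (2:ℝ) ^ (2 ^ m) ≤ Us := by
    have := hUs.2 ⟨2 ^ m, ⟨hmem, le_refl _⟩, rfl⟩
    simpa [hatmax] using this
  have hUsval : Us = 1 / (2:ℝ) ^ (2 ^ m) := le_antisymm hub hlb
  rw [hUsval]
  have hratio : ((2 : ℝ) ^ m / ((2 : ℝ) ^ (2 ^ m + 1) - 2)) / (1 / (2:ℝ) ^ (2 ^ m))
      = (2:ℝ) ^ m * (2:ℝ) ^ (2 ^ m) / ((2 : ℝ) ^ (2 ^ m + 1) - 2) := by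
    field_simp
  rw [hratio]
  have e2 : (2:ℝ) ^ (2 ^ m + 1) = 2 * 2 ^ (2 ^ m) := by ring
  have em : (2:ℝ) ^ m = 2 ^ (m - 1) * 2 := by
    rw [← pow_succ]
    congr 1
    omega
  have hpos1 : (0:ℝ) < 2 ^ (m - 1) := by positivity
  have hpos2 : (0:ℝ) < (2:ℝ) ^ (2 ^ m) := by positivity
  have h2le : (2:ℝ) ≤ (2:ℝ) ^ (2 ^ m) := le_self_pow₀ one_le_two (Nat.pos_of_ne_zero (by positivity)).ne'
  constructor
  · rw [le_div_iff₀ hD, e2, em]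
    nlinarith
  · rw [div_le_iff₀ hD, e2]
    nlinarith [pow_pos (show (0:ℝ) < 2 by norm_num) m]
end

section
/- The first-price payment rule is core-selecting: if X is an efficient allocation rule and p_i(b) = b_i(X_i(b)) for all i, then for every coalition L ⊆ N, Σ_{j∈N∖L} p_j(b) ≥ W(b, L, M) − W(b, L, X_L(b)), and p is individually rational. -/
open Finset

/-- The first-price payment rule is core-selecting: if `x` is an efficient
(feasible, welfare-maximizing) allocation and each winner pays her bid
`p_i = b_i(x_i)`, then every coalitional core constraint
`Σ_{j ∉ L} p_j ≥ W(b, L, M) − W(b, L, X_L)` holds, and the payments are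
individually rational. -/
theorem stmt6 {ι γ : Type*} [Fintype ι] [DecidableEq ι] [Fintype γ] [DecidableEq γ]
    (b : ι → Finset γ → ℝ) (hb0 : ∀ i K, 0 ≤ b i K)
    (hbmono : ∀ i, Monotone (b i))
    (x : ι → Finset γ) (hfeas : ∀ i j, i ≠ j → Disjoint (x i) (x j))
    (heff : ∀ y : ι → Finset γ, (∀ i j, i ≠ j → Disjoint (y i) (y j)) →
      ∑ i, b i (y i) ≤ ∑ i, b i (x i)) :
    (∀ L : Finset ι,
      W b L Finset.univ - W b L (L.biUnion x) ≤ ∑ j ∈ Lᶜ, b j (x j)) ∧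
    (∀ i, b i (x i) ≤ b i (x i)) := by
  constructor
  · intro L
    rw [sub_le_iff_le_add]
    have hW2_mem : ∑ i ∈ L, b i (x i) ∈ {w : ℝ | ∃ x' : ι → Finset γ,
        (∀ i, x' i ⊆ L.biUnion x) ∧ (∀ i j, i ≠ j → Disjoint (x' i) (x' j)) ∧
        w = ∑ i ∈ L, b i (x' i)} := by
      refine ⟨fun i => if i ∈ L then x i else ∅, ?_, ?_, ?_⟩
      · intro i
        by_cases h : i ∈ L
        · simpa [h] using Finset.subset_biUnion_of_mem x h
        · simp [h]
      · intro i j hij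
        by_cases hi : i ∈ L <;> by_cases hj : j ∈ L <;>
          simp [hi, hj, hfeas i j hij]
      · exact Finset.sum_congr rfl fun i hi => by simp [hi]
    have hbdd : BddAbove {w : ℝ | ∃ x' : ι → Finset γ,
        (∀ i, x' i ⊆ L.biUnion x) ∧ (∀ i j, i ≠ j → Disjoint (x' i) (x' j)) ∧
        w = ∑ i ∈ L, b i (x' i)} := by
      refine ⟨∑ i ∈ L, b i Finset.univ, ?_⟩
      rintro w ⟨x', _, _, rfl⟩
      exact Finset.sum_le_sum fun i _ => hbmono i (Finset.subset_univ _)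
    have h2 : ∑ i ∈ L, b i (x i) ≤ W b L (L.biUnion x) := le_csSup hbdd hW2_mem
    have h1 : W b L Finset.univ ≤ ∑ i ∈ L, b i (x i) + ∑ j ∈ Lᶜ, b j (x j) := by
      apply Real.sSup_le
      · rintro w ⟨x', hsub, hdisj, rfl⟩
        set y : ι → Finset γ := fun i => if i ∈ L then x' i else ∅ with hy
        have hyd : ∀ i j, i ≠ j → Disjoint (y i) (y j) := by
          intro i j hij
          by_cases hi : i ∈ L <;> by_cases hj : j ∈ L <;>
            simp [y, hi, hj, hdisj i j hij]
        have hle := heff y hyd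
        have hsplit : ∑ i, b i (y i) = ∑ i ∈ L, b i (x' i) + ∑ i ∈ Lᶜ, b i (∅) := by
          rw [← Finset.sum_add_sum_compl L]
          congr 1
          · exact Finset.sum_congr rfl fun i hi => by simp [y, hi]
          · exact Finset.sum_congr rfl fun i hi => by
              simp [y, Finset.mem_compl.mp hi]
        have hx : ∑ i, b i (x i) = ∑ i ∈ L, b i (x i) + ∑ i ∈ Lᶜ, b i (x i) :=
          (Finset.sum_add_sum_compl L _).symm
        have hnn : 0 ≤ ∑ i ∈ Lᶜ, b i (∅ : Finset γ) :=
          Finset.sum_nonneg fun i _ => hb0 i _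
        linarith
      · exact add_nonneg (Finset.sum_nonneg fun i _ => hb0 i _)
          (Finset.sum_nonneg fun i _ => hb0 i _)
    linarith
  · intro i
    exact le_refl _
end

section
/- In auction family F'(m+3), when bidder 1 wins with bid b on her active bundle (b ≥ f(j)), the VCG-nearest payment of bidder 1 is min(b, (C + 2f(j))/3); in particular, for C large enough that (C + 2f(j))/3 > 1 ≥ b, bidder 1's VCG-nearest payment equals her bid b (identical to first price). -/
/-- In auction family `F'(m+3)`, when bidder 1 wins with bid `b ≥ t = f(j)` on
her active bundle, her VCG-nearest payment — the minimizer of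
`(Δ − t)² + 2((C − Δ)/2)²` over the individually rational range `[0, b]` —
equals `min(b, (C + 2t)/3)`; in particular, when `C` is large enough that
`(C + 2t)/3 > 1 ≥ b`, bidder 1's VCG-nearest payment equals her bid `b`
(identical to first price). -/
theorem stmt18 (C t b : ℝ) (hC : 0 ≤ C) (ht : 0 ≤ t) (htb : t ≤ b) :
    (min b ((C + 2 * t) / 3) ∈ Set.Icc 0 b) ∧
    (∀ Δ ∈ Set.Icc (0 : ℝ) b,
      (min b ((C + 2 * t) / 3) - t) ^ 2
          + 2 * ((C - min b ((C + 2 * t) / 3)) / 2) ^ 2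
        ≤ (Δ - t) ^ 2 + 2 * ((C - Δ) / 2) ^ 2) ∧
    (1 < (C + 2 * t) / 3 → b ≤ 1 → min b ((C + 2 * t) / 3) = b) := by
  refine ⟨⟨?_, min_le_left _ _⟩, ?_, ?_⟩
  · exact le_min (le_trans ht htb) (by positivity)
  · intro Δ hΔ
    obtain ⟨h0, hb⟩ := hΔ
    rcases le_total b ((C + 2 * t) / 3) with h | h
    · rw [min_eq_left h]
      nlinarith [sq_nonneg (Δ - b)]
    · rw [min_eq_right h]
      nlinarith [sq_nonneg (Δ - (C + 2 * t) / 3)]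
  · intro h1 hb1
    exact min_eq_left (le_of_lt (lt_of_le_of_lt hb1 h1))
end
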